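/- arXiv:math/0610964 — 3 statements merged into one kernel-verified Lean document; each statement's English description precedes it below -/
import Mathlib

section
/- For real constants a ≠ 0 and b ≠ 0, the function f(u,v) = √(a² + u²) − √(b² + v²) satisfies f·(f_uu·f_vv − f_uv²) − [(1 − f_v²)·f_uu + 2·f_u·f_v·f_uv + (1 − f_u²)·f_vv] = 0 at every point (u,v) ∈ ℝ². -/
/-- Partial derivative in the first variable. -/
noncomputable def pd1 (f : ℝ → ℝ → ℝ) (u v : ℝ) : ℝ := deriv (fun t => f t v) u

/-- Partial derivative in the second variable. -/
noncomputable def pd2 (f : ℝ → ℝ → ℝ) (u v : ℝ) : ℝ := deriv (fun t => f u t) v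

/-- Equation (6.2): the PDE for graphs in the upper half-space model of S₁³
with conformal normal Gauss map, at the point (u, v). -/
noncomputable def deSitterPDE (f : ℝ → ℝ → ℝ) (u v : ℝ) : Prop :=
  f u v * (pd1 (pd1 f) u v * pd2 (pd2 f) u v - pd2 (pd1 f) u v ^ 2) -
    ((1 - pd2 f u v ^ 2) * pd1 (pd1 f) u v +
      2 * pd1 f u v * pd2 f u v * pd2 (pd1 f) u v +
      (1 - pd1 f u v ^ 2) * pd2 (pd2 f) u v) = 0

/-!
Write `f u v = g u + h v` with `g u = √(a² + u²)` and `h v = -√(b² + v²)`. Then `f_uv = 0`, and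
both summands solve the ODE `1 - g'² = g g''` (equivalently `(g²)'' = 2`). Substituting it for
the factors `1 - f_v²` and `1 - f_u²` collapses (6.2) to `(g + h) g'' h'' = h h'' g'' + g g'' h''`.
-/

theorem deSitterPDE_add {g h : ℝ → ℝ} {u v : ℝ}
    (hg : 1 - deriv g u ^ 2 = g u * deriv (deriv g) u)
    (hh : 1 - deriv h v ^ 2 = h v * deriv (deriv h) v) :
    deSitterPDE (fun u v => g u + h v) u v := by
  have h₁ : pd1 (fun u v => g u + h v) = fun u _ => deriv g u := by
    funext x y
    exact deriv_add_const _
  have h₂ : pd2 (fun u v => g u + h v) = fun _ v => deriv h v := by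
    funext x y
    exact deriv_const_add _
  unfold deSitterPDE
  rw [h₁, h₂]
  simp only [pd1, pd2, deriv_const]
  linear_combination (-deriv (deriv g) u) * hh - deriv (deriv h) v * hg

theorem one_sub_deriv_sq_neg {g : ℝ → ℝ} {t : ℝ}
    (hg : 1 - deriv g t ^ 2 = g t * deriv (deriv g) t) :
    1 - deriv (-g) t ^ 2 = (-g) t * deriv (deriv (-g)) t := by
  simp only [deriv.neg', deriv.fun_neg, Pi.neg_apply]
  linear_combination hg

theorem hasDerivAt_sqrt_const_add_sq {c : ℝ} (hc : 0 < c) (t : ℝ) :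
    HasDerivAt (fun t => √(c + t ^ 2)) (t / √(c + t ^ 2)) t := by
  have hq : HasDerivAt (fun t => c + t ^ 2) (2 * t) t := by
    simpa using (hasDerivAt_pow 2 t).const_add c
  convert hq.sqrt (by positivity) using 1
  field_simp

theorem hasDerivAt_div_sqrt_const_add_sq {c : ℝ} (hc : 0 < c) (t : ℝ) :
    HasDerivAt (fun t => t / √(c + t ^ 2)) (c / ((c + t ^ 2) * √(c + t ^ 2))) t := by
  have hs : 0 < √(c + t ^ 2) := Real.sqrt_pos.mpr (by positivity)
  have hsq : √(c + t ^ 2) ^ 2 = c + t ^ 2 := Real.sq_sqrt (by positivity)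
  refine ((hasDerivAt_id' t).div (hasDerivAt_sqrt_const_add_sq hc t) hs.ne').congr_deriv ?_
  field_simp
  rw [hsq]
  ring

theorem one_sub_deriv_sq_sqrt_const_add_sq {c : ℝ} (hc : 0 < c) (t : ℝ) :
    1 - deriv (fun t => √(c + t ^ 2)) t ^ 2 =
      √(c + t ^ 2) * deriv (deriv fun t => √(c + t ^ 2)) t := by
  have hderiv : deriv (fun t => √(c + t ^ 2)) = fun t => t / √(c + t ^ 2) :=
    funext fun t => (hasDerivAt_sqrt_const_add_sq hc t).deriv
  have hsq : √(c + t ^ 2) ^ 2 = c + t ^ 2 := Real.sq_sqrt (by positivity)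
  rw [hderiv, (hasDerivAt_div_sqrt_const_add_sq hc t).deriv]
  field_simp
  rw [hsq]
  ring

/-- Theorem 6.1 (minus sign): f(u,v) = √(a²+u²) − √(b²+v²) solves (6.2). -/
theorem stmt_8 (a b : ℝ) (ha : a ≠ 0) (hb : b ≠ 0) (u v : ℝ) :
    deSitterPDE (fun u v => Real.sqrt (a ^ 2 + u ^ 2) - Real.sqrt (b ^ 2 + v ^ 2)) u v := by
  have hu := one_sub_deriv_sq_sqrt_const_add_sq (c := a ^ 2) (by positivity) u
  have hv := one_sub_deriv_sq_neg (one_sub_deriv_sq_sqrt_const_add_sq (c := b ^ 2) (by positivity) v)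
  simpa only [Pi.neg_apply, ← sub_eq_add_neg] using deSitterPDE_add hu hv
end

section
/- For real constants c₁ ≠ 0 and c₂, the function f(u,v) = (c₁c₂ + uv)/√(c₁² + v²) satisfies the PDE f·(f_uu·f_vv − f_uv²) − [(1 − f_v²)·f_uu + 2·f_u·f_v·f_uv + (1 − f_u²)·f_vv] = 0 at every point (u,v) ∈ ℝ². -/
/-!
The function is affine in `u` with slope `h v = v / √(c₁² + v²)`, so `f_uu = 0` and
`f_uv = h'`. The equation then says that, for each fixed `u`, `w = f u ·` solves the linear ODE
`(1 - h²) w'' + 2 h h' w' + h'² w = 0`, and every `w v = (α + β v) / √(c₁² + v²)` does, by a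
direct computation using `1 - h² = c₁² / (c₁² + v²)`.
-/

theorem deSitterPDE_of_pd1_eq {f : ℝ → ℝ → ℝ} {h : ℝ → ℝ} (hf : ∀ u v, pd1 f u v = h v)
    {u v : ℝ}
    (hode : (1 - h v ^ 2) * pd2 (pd2 f) u v + 2 * h v * deriv h v * pd2 f u v
      + deriv h v ^ 2 * f u v = 0) :
    deSitterPDE f u v := by
  have hf_uu : pd1 (pd1 f) u v = 0 := by
    show deriv (fun t => pd1 f t v) u = 0
    simp only [hf, deriv_const]
  have hf_uv : pd2 (pd1 f) u v = deriv h v := by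
    show deriv (fun t => pd1 f u t) v = deriv h v
    simp only [hf]
  rw [deSitterPDE, hf_uu, hf_uv, hf]
  linear_combination -hode

section AffineDivSqrt

variable {c : ℝ} (hc : c ≠ 0)
include hc

theorem hasDerivAt_sqrt_sq_add_sq (v : ℝ) :
    HasDerivAt (fun t => √(c ^ 2 + t ^ 2)) (v / √(c ^ 2 + v ^ 2)) v := by
  refine ((((hasDerivAt_id v).fun_pow 2).const_add (c ^ 2)).sqrt
    (by positivity)).congr_deriv ?_
  simp only [id]
  field_simp
  ring

theorem hasDerivAt_affine_div_sqrt_pow (α β v : ℝ) (n : ℕ) :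
    HasDerivAt (fun t => (α + β * t) / √(c ^ 2 + t ^ 2) ^ n)
      ((β * (c ^ 2 + v ^ 2) - n * v * (α + β * v)) / √(c ^ 2 + v ^ 2) ^ (n + 2)) v := by
  have hs : 0 < √(c ^ 2 + v ^ 2) := by positivity
  have hnum : HasDerivAt (fun t => α + β * t) β v := by
    simpa using ((hasDerivAt_id v).const_mul β).const_add α
  refine (hnum.fun_div ((hasDerivAt_sqrt_sq_add_sq hc v).fun_pow n) (by positivity)).congr_deriv ?_
  have hs2 : √(c ^ 2 + v ^ 2) ^ 2 = c ^ 2 + v ^ 2 := Real.sq_sqrt (by positivity)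
  set s := √(c ^ 2 + v ^ 2)
  rw [← hs2]
  rcases n with _ | n
  · simp [field]
  · simp only [Nat.add_sub_cancel]
    field_simp
    push_cast
    ring

theorem one_sub_div_sqrt_sq_add_sq (v : ℝ) :
    1 - (v / √(c ^ 2 + v ^ 2)) ^ 2 = c ^ 2 / √(c ^ 2 + v ^ 2) ^ 2 := by
  rw [div_pow, Real.sq_sqrt (by positivity)]
  field_simp
  ring

theorem deriv_affine_div_sqrt (α β : ℝ) :
    deriv (fun t => (α + β * t) / √(c ^ 2 + t ^ 2))
      = fun v => (β * c ^ 2 - α * v) / √(c ^ 2 + v ^ 2) ^ 3 := by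
  funext v
  have h := hasDerivAt_affine_div_sqrt_pow hc α β v 1
  simp only [pow_one] at h
  rw [h.deriv]
  push_cast
  ring

theorem deriv_deriv_affine_div_sqrt (α β v : ℝ) :
    deriv (deriv (fun t => (α + β * t) / √(c ^ 2 + t ^ 2))) v
      = (-α * (c ^ 2 + v ^ 2) - 3 * v * (β * c ^ 2 - α * v)) / √(c ^ 2 + v ^ 2) ^ 5 := by
  have h := hasDerivAt_affine_div_sqrt_pow hc (β * c ^ 2) (-α) v 3
  simp only [neg_mul, ← sub_eq_add_neg] at h
  rw [deriv_affine_div_sqrt hc, h.deriv]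
  push_cast
  ring

end AffineDivSqrt

/-- Corollary to Theorem 6.2: f(u,v) = (c₁c₂ + uv)/√(c₁² + v²) solves (6.2). -/
theorem stmt_9 (c₁ c₂ : ℝ) (hc : c₁ ≠ 0) (u v : ℝ) :
    deSitterPDE (fun u v => (c₁ * c₂ + u * v) / Real.sqrt (c₁ ^ 2 + v ^ 2)) u v := by
  have hslope : deriv (fun t => t / √(c₁ ^ 2 + t ^ 2)) v = c₁ ^ 2 / √(c₁ ^ 2 + v ^ 2) ^ 3 := by
    simpa using congrFun (deriv_affine_div_sqrt hc 0 1) v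
  refine deSitterPDE_of_pd1_eq (h := fun t => t / √(c₁ ^ 2 + t ^ 2)) (fun u v => ?_) ?_
  · exact ((((hasDerivAt_id u).mul_const v).const_add _).div_const _).deriv.trans (by simp)
  · simp only [pd2]
    rw [hslope, deriv_deriv_affine_div_sqrt hc, deriv_affine_div_sqrt hc,
      one_sub_div_sqrt_sq_add_sq hc]
    field_simp
    ring
end

section
/- There is no twice continuously differentiable function f: ℝ² → ℝ with f > 0 everywhere, f_u² + f_v² > 1 everywhere, and such that f solves f·(f_uu·f_vv − f_uv²) − [(1 − f_v²)·f_uu + 2·f_u·f_v·f_uv + (1 − f_u²)·f_vv] = 0 on all of ℝ². -/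
open Filter Set

theorem Continuous.exists_forall_le_add_mul_norm {E : Type*} [NormedAddCommGroup E] [ProperSpace E]
    {f : E → ℝ} (hf : Continuous f) (hb : BddBelow (range f))
    {ε : ℝ} (hε : 0 < ε) : ∃ m, ∀ y, f m + ε * ‖m‖ ≤ f y + ε * ‖y‖ := by
  obtain ⟨c, hc⟩ := hb
  refine (hf.add (continuous_const.mul continuous_norm)).exists_forall_le ?_
  refine tendsto_atTop_mono (fun y => add_le_add_left (hc (mem_range_self y)) _) ?_
  exact tendsto_atTop_add_const_left _ c
    ((tendsto_norm_cocompact_atTop).const_mul_atTop hε)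

section SmallDerivative

variable {E : Type*} [NormedAddCommGroup E] [NormedSpace ℝ E]

theorem HasFDerivAt.neg_mul_norm_le_apply {f : E → ℝ} {f' : E →L[ℝ] ℝ} {m : E} {ε : ℝ}
    (hf : HasFDerivAt f f' m) (hmin : ∀ y, f m - ε * ‖y - m‖ ≤ f y) (w : E) :
    -(ε * ‖w‖) ≤ f' w := by
  set ψ : ℝ → ℝ := fun t => f (m + t • w) + ε * ‖w‖ * t
  have hline : HasDerivAt (fun t : ℝ => m + t • w) w 0 := by
    simpa using ((hasDerivAt_id (0 : ℝ)).smul_const w).const_add m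
  have hψ : HasDerivAt ψ (f' w + ε * ‖w‖) 0 :=
    ((hf.comp_hasDerivAt_of_eq 0 hline (by simp)).add
      ((hasDerivAt_id (0 : ℝ)).const_mul (ε * ‖w‖))).congr_deriv (by simp)
  have hψmin : IsLocalMinOn ψ (Ici 0) 0 := by
    refine IsMinOn.localize (isMinOn_iff.2 fun t (ht : 0 ≤ t) => ?_)
    have := hmin (m + t • w)
    simp only [add_sub_cancel_left, norm_smul, Real.norm_of_nonneg ht] at this
    simp only [ψ, zero_smul, add_zero, mul_zero]
    nlinarith
  have hone : (1 : ℝ) ∈ posTangentConeAt (Ici 0) (0 : ℝ) :=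
    mem_posTangentConeAt_of_segment_subset
      (by rw [zero_add, segment_eq_Icc zero_le_one]; exact Icc_subset_Ici_self)
  have := hψmin.hasFDerivWithinAt_nonneg hψ.hasFDerivAt.hasFDerivWithinAt hone
  simp only [ContinuousLinearMap.toSpanSingleton_apply, smul_eq_mul, one_mul] at this
  linarith

theorem HasFDerivAt.norm_le_of_forall_sub_mul_norm_le {f : E → ℝ} {f' : E →L[ℝ] ℝ} {m : E}
    {ε : ℝ} (hε : 0 ≤ ε) (hf : HasFDerivAt f f' m) (hmin : ∀ y, f m - ε * ‖y - m‖ ≤ f y) :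
    ‖f'‖ ≤ ε := by
  refine f'.opNorm_le_bound hε fun w => abs_le.2 ⟨hf.neg_mul_norm_le_apply hmin w, ?_⟩
  have := hf.neg_mul_norm_le_apply hmin (-w)
  rw [map_neg, norm_neg] at this
  linarith

theorem Differentiable.exists_norm_fderiv_le [ProperSpace E] {f : E → ℝ} (hf : Differentiable ℝ f)
    (hb : BddBelow (range f)) {ε : ℝ} (hε : 0 < ε) : ∃ m, ‖fderiv ℝ f m‖ ≤ ε := by
  obtain ⟨m, hm⟩ := hf.continuous.exists_forall_le_add_mul_norm hb hε
  refine ⟨m, (hf m).hasFDerivAt.norm_le_of_forall_sub_mul_norm_le hε.le fun y => ?_⟩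
  have := hm y
  nlinarith [norm_sub_norm_le y m]

end SmallDerivative

theorem pd1_eq_fderiv_apply {f : ℝ → ℝ → ℝ} {u v : ℝ}
    (hf : DifferentiableAt ℝ (fun p : ℝ × ℝ => f p.1 p.2) (u, v)) :
    pd1 f u v = fderiv ℝ (fun p : ℝ × ℝ => f p.1 p.2) (u, v) (1, 0) :=
  (hf.hasFDerivAt.comp_hasDerivAt (f := fun t : ℝ => (t, v)) u
    ((hasDerivAt_id u).prodMk (hasDerivAt_const u v))).deriv

theorem pd2_eq_fderiv_apply {f : ℝ → ℝ → ℝ} {u v : ℝ}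
    (hf : DifferentiableAt ℝ (fun p : ℝ × ℝ => f p.1 p.2) (u, v)) :
    pd2 f u v = fderiv ℝ (fun p : ℝ × ℝ => f p.1 p.2) (u, v) (0, 1) :=
  (hf.hasFDerivAt.comp_hasDerivAt (f := fun t : ℝ => (u, t)) v
    ((hasDerivAt_const v u).prodMk (hasDerivAt_id v))).deriv

/-- Nonexistence (end of Section 7): no positive entire time-like solution of (6.2). -/
theorem stmt_17 :
    ¬ ∃ f : ℝ → ℝ → ℝ, ContDiff ℝ 2 (fun p : ℝ × ℝ => f p.1 p.2) ∧
      (∀ u v : ℝ, 0 < f u v) ∧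
      (∀ u v : ℝ, 1 < pd1 f u v ^ 2 + pd2 f u v ^ 2) ∧
      (∀ u v : ℝ, deSitterPDE f u v) := by
  rintro ⟨f, hf, hpos, htime, -⟩
  set F : ℝ × ℝ → ℝ := fun p => f p.1 p.2
  have hF : Differentiable ℝ F := hf.differentiable (by norm_num)
  have hFbdd : BddBelow (range F) := ⟨0, by rintro _ ⟨p, rfl⟩; exact (hpos p.1 p.2).le⟩
  obtain ⟨⟨u, v⟩, hsmall⟩ := hF.exists_norm_fderiv_le hFbdd one_half_pos
  have h1 : |pd1 f u v| ≤ 1 / 2 := by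
    simpa [pd1_eq_fderiv_apply (hF _)] using (fderiv ℝ F (u, v)).le_of_opNorm_le hsmall (1, 0)
  have h2 : |pd2 f u v| ≤ 1 / 2 := by
    simpa [pd2_eq_fderiv_apply (hF _)] using (fderiv ℝ F (u, v)).le_of_opNorm_le hsmall (0, 1)
  nlinarith [htime u v, sq_abs (pd1 f u v), sq_abs (pd2 f u v), abs_nonneg (pd1 f u v),
    abs_nonneg (pd2 f u v)]
end
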